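/- Let A(w) be an affine Manin matrix of parity s over a superalgebra 𝒜, and let σ ∈ S_{m+n}. Then Ber^s A(w) = Ber^{σ(s)} σ(A(w)), where σ(A(w)) = (a_{σ^{−1}(i),σ^{−1}(j)}(w))_{i,j} and σ(s) = (s_{σ^{−1}(1)},…,s_{σ^{−1}(m+n)}). -/

import Mathlib

noncomputable section
open scoped Classical

/-- A superalgebra structure on an associative unital `ℂ`-algebra `A`:
a `ℤ/2`-grading `A = A₀ ⊕ A₁` compatible with the multiplication. -/
structure SuperAlg (A : Type*) [Ring A] [Algebra ℂ A] where
  /-- The homogeneous components. -/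
  g : ZMod 2 → Submodule ℂ A
  one_mem : (1 : A) ∈ g 0
  mul_mem : ∀ {d e : ZMod 2} {a b : A}, a ∈ g d → b ∈ g e → a * b ∈ g (d + e)
  decomp : ∀ a : A, ∃ a0 ∈ g 0, ∃ a1 ∈ g 1, a = a0 + a1
  disjoint : ∀ a : A, a ∈ g 0 → a ∈ g 1 → a = 0

/-- `(−1)^d` for `d : ℤ/2`. -/
def sgnZ (d : ZMod 2) : ℤ := if d = 0 then 1 else -1

/-- A parity sequence: each `s i ∈ {1,−1}`. -/
def IsParitySeq {N : ℕ} (s : Fin N → ℤ) : Prop := ∀ i, s i = 1 ∨ s i = -1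

/-- The `ℤ/2`-degree `ī^s` attached to a parity sequence. -/
def pdeg {N : ℕ} (s : Fin N → ℤ) (i : Fin N) : ZMod 2 := if s i = 1 then 0 else 1

/-- The supercommutator `[x,y] = xy − (−1)^{x̄·ȳ} yx` of elements of (declared) degrees
`dx`, `dy`. -/
def scomm {B : Type*} [Ring B] (dx dy : ZMod 2) (x y : B) : B :=
  x * y - sgnZ (dx * dy) • (y * x)

/-- A matrix is of parity `s` if its `(i,j)` entry is homogeneous of degree `ī^s + j̄^s`
(with respect to the grading `g`). -/
def IsMatParity {B : Type*} [Ring B] [Algebra ℂ B] (g : ZMod 2 → Submodule ℂ B) {N : ℕ}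
    (s : Fin N → ℤ) (M : Matrix (Fin N) (Fin N) B) : Prop :=
  ∀ i j, M i j ∈ g (pdeg s i + pdeg s j)

/-- A Manin matrix of parity `s`: a matrix of parity `s` whose entries satisfy
`[a_{i,j},a_{p,q}] = (−1)^{ī^s j̄^s + ī^s p̄^s + j̄^s p̄^s} [a_{p,j},a_{i,q}]`. -/
def IsManin {B : Type*} [Ring B] [Algebra ℂ B] (g : ZMod 2 → Submodule ℂ B) {N : ℕ}
    (s : Fin N → ℤ) (M : Matrix (Fin N) (Fin N) B) : Prop :=
  IsMatParity g s M ∧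
    ∀ i j p q, scomm (pdeg s i + pdeg s j) (pdeg s p + pdeg s q) (M i j) (M p q) =
      sgnZ (pdeg s i * pdeg s j + pdeg s i * pdeg s p + pdeg s j * pdeg s p) •
        scomm (pdeg s p + pdeg s j) (pdeg s i + pdeg s q) (M p j) (M i q)

/-- The grading on `𝒜[[w]]` induced by a grading on `𝒜` (the variable `w` is even):
a power series is homogeneous of degree `d` iff all its coefficients are. -/
def gPS {A : Type*} [Ring A] [Algebra ℂ A] (g : ZMod 2 → Submodule ℂ A) (d : ZMod 2) :
    Submodule ℂ (PowerSeries A) where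
  carrier := {f | ∀ t : ℕ, PowerSeries.coeff t f ∈ g d}
  add_mem' := by
    intro f h hf hh t
    rw [map_add]
    exact (g d).add_mem (hf t) (hh t)
  zero_mem' := by
    intro t
    rw [map_zero]
    exact (g d).zero_mem
  smul_mem' := by
    intro c f hf t
    have : PowerSeries.coeff t (c • f) = c • PowerSeries.coeff t f := rfl
    rw [this]
    exact (g d).smul_mem c (hf t)

/-- An affine matrix over `𝒜`: a matrix with entries in `𝒜[[w]]` whose constant term is the
identity matrix. -/
def IsAffine {A : Type*} [Ring A] {N : ℕ} (M : Matrix (Fin N) (Fin N) (PowerSeries A)) :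
    Prop :=
  ∀ i j, PowerSeries.coeff 0 (M i j) = if i = j then 1 else 0

/-- The leading principal `(i+1) × (i+1)` submatrix. -/
def leadSub {R : Type*} [Ring R] {N : ℕ} (M : Matrix (Fin N) (Fin N) R) (i : Fin N) :
    Matrix (Fin ((i : ℕ) + 1)) (Fin ((i : ℕ) + 1)) R :=
  M.submatrix (Fin.castLE i.isLt) (Fin.castLE i.isLt)

/-- The `(i+1)`-st principal quasi-minor `d_{i+1}(M)`: the two-sided inverse of the last
diagonal entry of the two-sided inverse of the leading principal `(i+1) × (i+1)` submatrix
(`Ring.inverse` is the genuine two-sided inverse whenever one exists, and junk `0` otherwise). -/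
def dQM {R : Type*} [Ring R] {N : ℕ} (M : Matrix (Fin N) (Fin N) R) (i : Fin N) : R :=
  Ring.inverse ((Ring.inverse (leadSub M i)) (Fin.last (i : ℕ)) (Fin.last (i : ℕ)))

/-- `x^e` for `e ∈ {1,−1}`: `x` itself for `e = 1` and the two-sided inverse for `e = −1`. -/
def pexp {R : Type*} [Ring R] (x : R) (e : ℤ) : R := if e = 1 then x else Ring.inverse x

/-- Ordered product `f 0 * f 1 * ⋯ * f (N-1)` in a possibly noncommutative ring. -/
def listProd {R : Type*} [Ring R] {N : ℕ} (f : Fin N → R) : R :=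
  ((List.finRange N).map f).prod

/-- The Berezinian of parity `s`: `Ber^s M = d_1(M)^{s_1} ⋯ d_N(M)^{s_N}`. -/
def berPar {R : Type*} [Ring R] {N : ℕ} (s : Fin N → ℤ) (M : Matrix (Fin N) (Fin N) R) : R :=
  listProd fun i => pexp (dQM M i) (s i)

/-!
The symmetric group is generated by adjacent transpositions, and the hypotheses are stable under a
simultaneous permutation of rows, columns and parities, so it suffices to swap `k` and `k + 1`.
This changes only the quasi-minors `d_k` and `d_{k+1}`, and both are read off from the inverse `h`
of the leading `(k + 2)`-block: if `x, y, z, w` are the entries of `h` in rows and columns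
`k, k + 1`, then `d_{k+1} = w⁻¹` and `d_k = (x - y w⁻¹ z)⁻¹`, and after the swap these become
`x⁻¹` and `(w - z x⁻¹ y)⁻¹`.

The Manin relations say `(1 - P) A₁A₂ (1 + P) = 0` for the super flip `P`. The inverse of `A₁A₂` is
`A₂⁻¹A₁⁻¹`, and `(1 - P) A₁A₂ (1 - P) + 2 (1 + P)` is invertible because its constant term is
(`A(0) = 1`); together these give `(1 - P) A₂⁻¹A₁⁻¹ (1 + P) = 0`. Read in rows and columns
`k, k + 1`, this yields commutation relations among `x, y, z, w`, and in each of the four parity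
cases they make the two products of quasi-minors equal.
-/

open PowerSeries

theorem map_ringInverse {R S F : Type*} [Ring R] [Ring S] [FunLike F R S] [MonoidHomClass F R S]
    (f : F) {x : R} (hx : IsUnit x) : f (Ring.inverse x) = Ring.inverse (f x) := by
  obtain ⟨u, rfl⟩ := hx
  rw [Ring.inverse_unit]
  exact (Ring.inverse_unit (Units.map (f : R →* S) u)).symm

theorem Ring.inverse_eq_of_mul_eq_one {R : Type*} [MonoidWithZero R] {a b : R} (hab : a * b = 1)
    (hba : b * a = 1) : Ring.inverse a = b :=
  Ring.inverse_unit ⟨a, b, hab, hba⟩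

theorem eq_zero_of_nsmul_eq_zero {E : Type*} [AddCommGroup E] [Module ℂ E] {u : E} {k : ℕ}
    (hk : k ≠ 0) (h : k • u = 0) : u = 0 := by
  rw [← Nat.cast_smul_eq_nsmul ℂ] at h
  exact (smul_eq_zero.mp h).resolve_left (Nat.cast_ne_zero.mpr hk)

theorem eq_of_nsmul_sub_eq_zero {E : Type*} [AddCommGroup E] [Module ℂ E] {a b : E} {k : ℕ}
    (hk : k ≠ 0) (h : k • (a - b) = 0) : a = b :=
  sub_eq_zero.mp (eq_zero_of_nsmul_eq_zero hk h)

namespace PowerSeries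

variable {R : Type*} [Ring R] {n : Type*} [Fintype n] [DecidableEq n]

def matrixEquiv : Matrix n n R⟦X⟧ ≃+* (Matrix n n R)⟦X⟧ where
  toFun M := mk fun t => Matrix.of fun i j => coeff t (M i j)
  invFun f := Matrix.of fun i j => mk fun t => coeff t f i j
  left_inv M := by ext; simp
  right_inv f := by ext; simp
  map_add' U V := by ext; simp
  map_mul' U V := by
    ext t i j
    simp only [coeff_mk, Matrix.of_apply, coeff_mul, Matrix.mul_apply, map_sum, Matrix.sum_apply]
    exact Finset.sum_comm

theorem constantCoeff_matrixEquiv (M : Matrix n n R⟦X⟧) :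
    constantCoeff (matrixEquiv M) = constantCoeff.mapMatrix M := by
  ext i j
  rw [← coeff_zero_eq_constantCoeff_apply]
  simp [matrixEquiv]

theorem isUnit_of_isUnit_mapMatrix_constantCoeff {M : Matrix n n R⟦X⟧}
    (h : IsUnit (constantCoeff.mapMatrix M)) : IsUnit M := by
  rw [← MulEquiv.isUnit_map (matrixEquiv (R := R) (n := n)), isUnit_iff_constantCoeff,
    constantCoeff_matrixEquiv]
  exact h

theorem isUnit_of_mapMatrix_constantCoeff_eq_one {M : Matrix n n R⟦X⟧}
    (h : constantCoeff.mapMatrix M = 1) : IsUnit M :=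
  isUnit_of_isUnit_mapMatrix_constantCoeff (h ▸ isUnit_one)

theorem mapMatrix_constantCoeff_ringInverse {M : Matrix n n R⟦X⟧}
    (h : constantCoeff.mapMatrix M = 1) : constantCoeff.mapMatrix (Ring.inverse M) = 1 := by
  rw [map_ringInverse _ (isUnit_of_mapMatrix_constantCoeff_eq_one h), h, Ring.inverse_one]

theorem constantCoeff_ringInverse_apply {M : Matrix n n R⟦X⟧}
    (h : constantCoeff.mapMatrix M = 1) (i j : n) :
    constantCoeff (Ring.inverse M i j) = (1 : Matrix n n R) i j :=
  congrFun (congrFun (mapMatrix_constantCoeff_ringInverse h) i) j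

theorem isUnit_of_constantCoeff_eq_one {f : R⟦X⟧} (hf : constantCoeff f = 1) : IsUnit f :=
  isUnit_iff_constantCoeff.mpr (hf ▸ isUnit_one)

theorem mapMatrix_constantCoeff_submatrix {m : Type*} [Fintype m] [DecidableEq m]
    {M : Matrix n n R⟦X⟧} (hM : constantCoeff.mapMatrix M = 1) {e : m → n}
    (he : Function.Injective e) : constantCoeff.mapMatrix (M.submatrix e e) = 1 := by
  rw [show constantCoeff.mapMatrix (M.submatrix e e) = (constantCoeff.mapMatrix M).submatrix e e
    from rfl, hM, Matrix.submatrix_one _ he]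

end PowerSeries

theorem IsAffine.mapMatrix_constantCoeff {R : Type*} [Ring R] {N : ℕ}
    {M : Matrix (Fin N) (Fin N) R⟦X⟧} (hM : IsAffine M) : constantCoeff.mapMatrix M = 1 := by
  ext i j
  rw [RingHom.mapMatrix_apply, Matrix.map_apply, ← coeff_zero_eq_constantCoeff_apply, hM,
    Matrix.one_apply]

namespace Matrix

variable {R : Type*} [Ring R]

theorem ringInverse_submatrix_equiv {m n : Type*} [Fintype m] [DecidableEq m] [Fintype n]
    [DecidableEq n] {X : Matrix n n R} (hX : IsUnit X) (e : m ≃ n) :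
    IsUnit (X.submatrix e e) ∧ Ring.inverse (X.submatrix e e) = (Ring.inverse X).submatrix e e := by
  have h₁ : X.submatrix e e * (Ring.inverse X).submatrix e e = 1 := by
    rw [submatrix_mul_equiv, Ring.mul_inverse_cancel X hX, submatrix_one_equiv]
  have h₂ : (Ring.inverse X).submatrix e e * X.submatrix e e = 1 := by
    rw [submatrix_mul_equiv, Ring.inverse_mul_cancel X hX, submatrix_one_equiv]
  exact ⟨⟨⟨_, _, h₁, h₂⟩, rfl⟩, Ring.inverse_eq_of_mul_eq_one h₁ h₂⟩

theorem ringInverse_submatrix_castSucc {κ : ℕ} {B : Matrix (Fin (κ + 1)) (Fin (κ + 1)) R}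
    (hB : IsUnit B) (hw : IsUnit (Ring.inverse B (Fin.last κ) (Fin.last κ))) :
    IsUnit (B.submatrix Fin.castSucc Fin.castSucc) ∧
    Ring.inverse (B.submatrix Fin.castSucc Fin.castSucc) = of fun i j =>
      Ring.inverse B i.castSucc j.castSucc - Ring.inverse B i.castSucc (Fin.last κ) *
        Ring.inverse (Ring.inverse B (Fin.last κ) (Fin.last κ)) *
          Ring.inverse B (Fin.last κ) j.castSucc := by
  set h := Ring.inverse B
  set iw := Ring.inverse (h (Fin.last κ) (Fin.last κ))
  have cancel_right (y : R) : y * h (Fin.last κ) (Fin.last κ) * iw = y :=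
    Ring.mul_inverse_cancel_right _ _ hw
  have cancel_left (y : R) : iw * (h (Fin.last κ) (Fin.last κ) * y) = y :=
    Ring.inverse_mul_cancel_left _ _ hw
  have row (i : Fin κ) (c : Fin (κ + 1)) : ∑ e : Fin κ, B i.castSucc e.castSucc * h e.castSucc c =
      (1 : Matrix _ _ R) i.castSucc c - B i.castSucc (Fin.last κ) * h (Fin.last κ) c := by
    rw [← Ring.mul_inverse_cancel B hB, mul_apply, Fin.sum_univ_castSucc, add_sub_cancel_right]
  have col (c : Fin (κ + 1)) (j : Fin κ) : ∑ e : Fin κ, h c e.castSucc * B e.castSucc j.castSucc =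
      (1 : Matrix _ _ R) c j.castSucc - h c (Fin.last κ) * B (Fin.last κ) j.castSucc := by
    rw [← Ring.inverse_mul_cancel B hB, mul_apply, Fin.sum_univ_castSucc, add_sub_cancel_right]
  have h₁ : B.submatrix Fin.castSucc Fin.castSucc * (of fun i j => h i.castSucc j.castSucc -
      h i.castSucc (Fin.last κ) * iw * h (Fin.last κ) j.castSucc) = 1 := by
    ext i j
    simp only [mul_apply, submatrix_apply, of_apply, mul_sub, ← mul_assoc, Finset.sum_sub_distrib,
      ← Finset.sum_mul, row]
    simp [one_apply, cancel_right]
  have h₂ : (of fun i j => h i.castSucc j.castSucc -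
      h i.castSucc (Fin.last κ) * iw * h (Fin.last κ) j.castSucc) *
        B.submatrix Fin.castSucc Fin.castSucc = 1 := by
    ext i j
    simp only [mul_apply, submatrix_apply, of_apply, sub_mul, mul_assoc, Finset.sum_sub_distrib,
      ← Finset.mul_sum, col]
    simp [one_apply, (Fin.castSucc_lt_last j).ne', cancel_left]
  exact ⟨⟨⟨_, _, h₁, h₂⟩, rfl⟩, Ring.inverse_eq_of_mul_eq_one h₁ h₂⟩

end Matrix

section Involution

variable {T : Type*} [Ring T] {P : T}

theorem one_sub_mul_one_add_of_mul_self (hP : P * P = 1) : (1 - P) * (1 + P) = 0 := by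
  rw [show (1 - P) * (1 + P) = 1 - P * P by noncomm_ring, hP, sub_self]

theorem one_add_mul_one_sub_of_mul_self (hP : P * P = 1) : (1 + P) * (1 - P) = 0 := by
  rw [show (1 + P) * (1 - P) = 1 - P * P by noncomm_ring, hP, sub_self]

theorem one_sub_mul_self_of_mul_self (hP : P * P = 1) : (1 - P) * (1 - P) = 2 * (1 - P) := by
  rw [show (1 - P) * (1 - P) = 1 - P - P + P * P by noncomm_ring, hP]
  noncomm_ring

theorem one_add_mul_self_of_mul_self (hP : P * P = 1) : (1 + P) * (1 + P) = 2 * (1 + P) := by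
  rw [show (1 + P) * (1 + P) = 1 + P + P + P * P by noncomm_ring, hP]
  noncomm_ring

theorem sandwich_inverse_eq_zero {Q Q' : T} (hP : P * P = 1) (hQQ' : Q * Q' = 1)
    (hQ : (1 - P) * Q * (1 + P) = 0)
    (hZ : IsUnit ((1 - P) * Q * (1 - P) + 2 * (1 + P))) :
    (1 - P) * Q' * (1 + P) = 0 := by
  have hFQF : (1 - P) * Q * (1 - P) * Q' * (1 + P) = 0 := by
    calc (1 - P) * Q * (1 - P) * Q' * (1 + P)
        = 2 * ((1 - P) * (Q * Q') * (1 + P)) - (1 - P) * Q * (1 + P) * Q' * (1 + P) := by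
          noncomm_ring
      _ = 0 := by rw [hQQ', mul_one, one_sub_mul_one_add_of_mul_self hP, hQ]; simp
  refine (hZ.mul_right_eq_zero).mp ?_
  calc ((1 - P) * Q * (1 - P) + 2 * (1 + P)) * ((1 - P) * Q' * (1 + P))
      = (1 - P) * Q * ((1 - P) * (1 - P)) * Q' * (1 + P)
          + 2 * ((1 + P) * (1 - P)) * Q' * (1 + P) := by noncomm_ring
    _ = 0 := by
      rw [one_sub_mul_self_of_mul_self hP, one_add_mul_one_sub_of_mul_self hP]
      rw [show (1 - P) * Q * (2 * (1 - P)) * Q' * (1 + P) =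
          2 * ((1 - P) * Q * (1 - P) * Q' * (1 + P)) by noncomm_ring, hFQF]
      simp

theorem isUnit_sandwich_of_commute [Algebra ℂ T] {D : T} (hP : P * P = 1) (hD : D * D = 1)
    (hPD : P * D = D * P) : IsUnit ((1 - P) * D * (1 - P) + 2 * (1 + P)) := by
  set v := 1 + P + D * (1 - P) with hv_def
  have hDF : (1 - P) * D = D * (1 - P) := by rw [sub_mul, mul_sub, one_mul, mul_one, hPD]
  have hDE : (1 + P) * D = D * (1 + P) := by rw [add_mul, mul_add, one_mul, mul_one, hPD]
  have hv : v * v = 4 := by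
    calc v * v = (1 + P) * (1 + P) + (1 + P) * D * (1 - P) + D * ((1 - P) * (1 + P))
          + D * ((1 - P) * D) * (1 - P) := by rw [hv_def]; noncomm_ring
      _ = (1 + P) * (1 + P) + D * ((1 + P) * (1 - P)) + D * ((1 - P) * (1 + P))
          + D * D * ((1 - P) * (1 - P)) := by rw [hDE, hDF]; noncomm_ring
      _ = 4 := by
        rw [one_add_mul_self_of_mul_self hP, one_sub_mul_self_of_mul_self hP,
          one_add_mul_one_sub_of_mul_self hP, one_sub_mul_one_add_of_mul_self hP, hD]
        noncomm_ring
        norm_num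
  have hZ : (1 - P) * D * (1 - P) + 2 * (1 + P) = 2 * v := by
    rw [hDF, mul_assoc, one_sub_mul_self_of_mul_self hP, hv_def]
    noncomm_ring
  have h16 : (2 * v) * (2 * v) = algebraMap ℂ T 16 := by
    rw [show (2 * v) * (2 * v) = 4 * (v * v) by noncomm_ring, hv, map_ofNat]; norm_num
  rw [hZ]
  refine ⟨⟨2 * v, (16⁻¹ : ℂ) • (2 * v), ?_, ?_⟩, rfl⟩
  · rw [mul_smul_comm, h16, Algebra.smul_def, ← map_mul]; norm_num
  · rw [smul_mul_assoc, h16, Algebra.smul_def, ← map_mul]; norm_num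

end Involution

theorem sgnZ_add (x y : ZMod 2) : sgnZ (x + y) = sgnZ x * sgnZ y := by
  revert x y; decide

theorem sgnZ_mul_sgnZ_mul_comm (x y : ZMod 2) : sgnZ (x * y) * sgnZ (y * x) = 1 := by
  revert x y; decide

theorem sgnZ_mul_self (x : ZMod 2) : sgnZ x * sgnZ x = 1 := by
  revert x; decide

theorem sgnZ_zero : sgnZ 0 = 1 := rfl

theorem sgnZ_one : sgnZ 1 = -1 := rfl

section SuperTensor

variable {R : Type*} [Ring R] {ι : Type*} (p : ι → ZMod 2)

/-- The Manin relations of `IsManin`, for an arbitrary parity function `p` on the indices. -/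
def ManinRelations (B : Matrix ι ι R) : Prop :=
  ∀ i j k l, scomm (p i + p j) (p k + p l) (B i j) (B k l) =
    sgnZ (p i * p j + p i * p k + p j * p k) • scomm (p k + p j) (p i + p l) (B k j) (B i l)

/-- The entries of `(1 - P) A₂⁻¹A₁⁻¹ (1 + P) = 0`, written in terms of `h = A⁻¹`. -/
def InverseManinRelations (h : Matrix ι ι R) : Prop :=
  ∀ i j k l, sgnZ (p i * p l) • (h j l * h i k) + sgnZ (p k * p l + p i * p k) • (h j k * h i l) -
    sgnZ (p i * p j + p j * p l) • (h i l * h j k) -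
      sgnZ (p k * p l + (p i * p j + p j * p k)) • (h i k * h j l) = 0

/-- The super flip `P` of `ℂ^{m|n} ⊗ ℂ^{m|n}`, `e_a ⊗ e_b ↦ (−1)^{ā b̄} e_b ⊗ e_a`. -/
def superFlip [DecidableEq ι] : Matrix (ι × ι) (ι × ι) R :=
  Matrix.of fun x y => if x.1 = y.2 ∧ x.2 = y.1 then ((sgnZ (p y.1 * p y.2) : ℤ) : R) else 0

/-- The super tensor square `A₁ A₂` of a matrix of parity `p`. -/
def superTensor (B : Matrix ι ι R) : Matrix (ι × ι) (ι × ι) R :=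
  Matrix.of fun x y => sgnZ (p x.2 * p y.1) • (B x.1 y.1 * B x.2 y.2)

/-- `A₂⁻¹ A₁⁻¹` in super tensor form, for `h = A⁻¹`. -/
def superTensorRev (h : Matrix ι ι R) : Matrix (ι × ι) (ι × ι) R :=
  Matrix.of fun x y => sgnZ (p x.1 * p y.2) • (h x.2 y.2 * h x.1 y.1)

def superSign [DecidableEq ι] : Matrix (ι × ι) (ι × ι) R :=
  Matrix.diagonal fun x => ((sgnZ (p x.1 * p x.2) : ℤ) : R)

variable {p}

theorem ManinRelations.submatrix {κ : Type*} {B : Matrix ι ι R} (hB : ManinRelations p B)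
    (e : κ → ι) : ManinRelations (p ∘ e) (B.submatrix e e) :=
  fun i j k l => hB (e i) (e j) (e k) (e l)

theorem superTensor_one [DecidableEq ι] : superTensor p (1 : Matrix ι ι R) = superSign p := by
  ext ⟨a, b⟩ ⟨c, d⟩
  by_cases hac : a = c <;> by_cases hbd : b = d
  · subst hac hbd; simp [superTensor, superSign, mul_comm (p b), zsmul_eq_mul]
  all_goals simp [superTensor, superSign, Matrix.one_apply, hac, hbd]

variable [Fintype ι] [DecidableEq ι]

theorem superFlip_mul_apply (X : Matrix (ι × ι) (ι × ι) R) (x y : ι × ι) :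
    (superFlip p * X : Matrix (ι × ι) (ι × ι) R) x y = sgnZ (p x.1 * p x.2) • X x.swap y := by
  rw [Matrix.mul_apply, Finset.sum_eq_single x.swap]
  · simp [superFlip, mul_comm (p x.2), zsmul_eq_mul]
  · rintro b - hb
    simp only [superFlip, Matrix.of_apply]
    rw [if_neg fun h => hb (Prod.ext h.2.symm h.1.symm), zero_mul]
  · simp

theorem mul_superFlip_apply (X : Matrix (ι × ι) (ι × ι) R) (x y : ι × ι) :
    (X * superFlip p : Matrix (ι × ι) (ι × ι) R) x y = sgnZ (p y.1 * p y.2) • X x y.swap := by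
  rw [Matrix.mul_apply, Finset.sum_eq_single y.swap]
  · simp [superFlip, zsmul_eq_mul, (Int.cast_commute _ _).eq]
  · rintro b - hb
    simp only [superFlip, Matrix.of_apply]
    rw [if_neg fun h => hb (Prod.ext h.1 h.2), mul_zero]
  · simp

theorem superFlip_mul_self : superFlip (R := R) p * superFlip p = 1 := by
  ext x y
  rw [superFlip_mul_apply, Matrix.one_apply]
  simp only [superFlip, Matrix.of_apply, Prod.fst_swap, Prod.snd_swap]
  by_cases h : x = y
  · subst h
    simp [← Int.cast_smul_eq_zsmul R, ← Int.cast_mul, sgnZ_mul_self]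
  · rw [if_neg fun h' => h (Prod.ext h'.2 h'.1), if_neg h, smul_zero]

theorem superTensor_mul_superTensorRev {B h : Matrix ι ι R} (hBh : B * h = 1) :
    superTensor p B * superTensorRev p h = 1 := by
  ext ⟨a, b⟩ ⟨c, d⟩
  have inner (u : ι) : ∑ v, superTensor p B (a, b) (u, v) * superTensorRev p h (u, v) (c, d) =
      (sgnZ (p b * p u) * sgnZ (p u * p d)) • (B a u * (1 : Matrix ι ι R) b d * h u c) := by
    simp only [superTensor, superTensorRev, Matrix.of_apply, smul_mul_smul, ← hBh,
      Matrix.mul_apply, Finset.mul_sum, Finset.sum_mul, Finset.smul_sum, mul_assoc]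
  rw [Matrix.mul_apply, Fintype.sum_prod_type]
  simp only [inner]
  by_cases hbd : b = d
  · subst hbd
    simp only [Matrix.one_apply_eq, mul_one, sgnZ_mul_sgnZ_mul_comm, one_smul, ← Matrix.mul_apply,
      hBh, Matrix.one_apply, Prod.mk.injEq, and_true]
  · simp [Matrix.one_apply_ne hbd, hbd]

theorem sandwich_superFlip_apply (X : Matrix (ι × ι) (ι × ι) R) (x y : ι × ι) :
    ((1 - superFlip p) * X * (1 + superFlip p) : Matrix (ι × ι) (ι × ι) R) x y =
      X x y + sgnZ (p y.1 * p y.2) • X x y.swap - sgnZ (p x.1 * p x.2) • X x.swap y -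
        sgnZ (p y.1 * p y.2) • sgnZ (p x.1 * p x.2) • X x.swap y.swap := by
  rw [show (1 - superFlip p) * X * (1 + superFlip p) =
      X + X * superFlip p - superFlip p * X - superFlip p * X * superFlip p by noncomm_ring]
  simp only [Matrix.sub_apply, Matrix.add_apply, mul_superFlip_apply, superFlip_mul_apply]

theorem ManinRelations.sandwich_superTensor {B : Matrix ι ι R} (hB : ManinRelations p B) :
    (1 - superFlip p) * superTensor p B * (1 + superFlip p) = 0 := by
  ext ⟨i, j⟩ ⟨k, l⟩
  have key := hB i k j l
  simp only [scomm] at key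
  simp only [sandwich_superFlip_apply, superTensor, Matrix.of_apply, Prod.fst_swap,
    Prod.snd_swap, Matrix.zero_apply]
  rw [sub_eq_iff_eq_add.mp key]
  simp only [smul_add, smul_sub, smul_smul, ← sgnZ_add]
  have signs : ∀ a b c d : ZMod 2,
      sgnZ (b * c + (a * c + a * b + c * b)) = sgnZ (a * b + a * c) ∧
      sgnZ (b * c + (a * c + a * b + c * b + (b + c) * (a + d))) = sgnZ (c * d + b * d) ∧
      sgnZ (b * c + (a + c) * (b + d)) = sgnZ (c * d + (a * b + a * d)) := by
    decide
  obtain ⟨h₁, h₂, h₃⟩ := signs (p i) (p j) (p k) (p l)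
  rw [h₁, h₂, h₃]
  abel

theorem ManinRelations.ringInverse {B : Matrix ι ι R} (hB : ManinRelations p B)
    (hBu : IsUnit B)
    (hZ : IsUnit ((1 - superFlip p) * superTensor p B * (1 - superFlip p) +
      2 * (1 + superFlip p))) :
    InverseManinRelations p (Ring.inverse B) := by
  intro i j k l
  have h := sandwich_inverse_eq_zero superFlip_mul_self
    (superTensor_mul_superTensorRev (Ring.mul_inverse_cancel B hBu)) hB.sandwich_superTensor hZ
  have e := congr_fun₂ h (i, j) (k, l)
  simp only [sandwich_superFlip_apply, superTensorRev, Matrix.of_apply, Prod.fst_swap,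
    Prod.snd_swap, Matrix.zero_apply, smul_smul, ← sgnZ_add] at e
  exact e

theorem superSign_mul_self : superSign (R := R) p * superSign p = 1 := by
  simp only [superSign, Matrix.diagonal_mul_diagonal, ← Int.cast_mul, sgnZ_mul_self, Int.cast_one,
    Matrix.diagonal_one]

theorem superFlip_mul_superSign :
    superFlip (R := R) p * superSign p = superSign p * superFlip p := by
  ext x y
  rw [superSign, Matrix.mul_diagonal, Matrix.diagonal_mul]
  simp only [superFlip, Matrix.of_apply]
  split_ifs with h
  · rw [h.1, h.2, mul_comm (p y.2)]
  · rw [zero_mul, mul_zero]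

theorem map_superTensor {S : Type*} [Ring S] (f : R →+* S) (B : Matrix ι ι R) :
    f.mapMatrix (superTensor p B) = superTensor p (f.mapMatrix B) := by
  ext x y
  simp [superTensor]

theorem map_superFlip {S : Type*} [Ring S] (f : R →+* S) :
    f.mapMatrix (superFlip p) = superFlip p := by
  ext x y
  simp [superFlip, apply_ite f]

theorem isUnit_sandwich_superTensor {A : Type*} [Ring A] [Algebra ℂ A] {B : Matrix ι ι A⟦X⟧}
    (hB : constantCoeff.mapMatrix B = 1) :
    IsUnit ((1 - superFlip p) * superTensor p B * (1 - superFlip p) + 2 * (1 + superFlip p)) := by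
  apply isUnit_of_isUnit_mapMatrix_constantCoeff
  simp only [map_add, map_sub, map_mul, map_one, map_ofNat, map_superFlip, map_superTensor, hB,
    superTensor_one]
  exact isUnit_sandwich_of_commute superFlip_mul_self superSign_mul_self superFlip_mul_superSign

end SuperTensor

section QuasiDet

variable {R : Type*} [Ring R] {x y z w : R}

theorem quasiDet_swap_even_even (hx : IsUnit x) (hw : IsUnit w)
    (hwy : w * y = y * w) (hxz : x * z = z * x) (hc : w * x - x * w = y * z - z * y) :
    Ring.inverse (x - y * Ring.inverse w * z) * Ring.inverse w =
      Ring.inverse (w - z * Ring.inverse x * y) * Ring.inverse x := by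
  have e₁ : w * (y * Ring.inverse w * z) = y * z := by
    rw [← mul_assoc, ← mul_assoc, hwy, Ring.mul_inverse_cancel_right _ _ hw]
  have e₂ : x * (z * Ring.inverse x * y) = z * y := by
    rw [← mul_assoc, ← mul_assoc, hxz, Ring.mul_inverse_cancel_right _ _ hx]
  rw [← Ring.inverse_mul (Or.inl hw), ← Ring.inverse_mul (Or.inl hx), mul_sub, mul_sub, e₁, e₂,
    sub_eq_sub_iff_sub_eq_sub.mpr hc]

theorem quasiDet_swap_odd_odd (hx : IsUnit x) (hw : IsUnit w)
    (hzw : z * w = w * z) (hxy : x * y = y * x) (hc : x * w - w * x = y * z - z * y) :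
    (x - y * Ring.inverse w * z) * w = (w - z * Ring.inverse x * y) * x := by
  have e₁ : y * Ring.inverse w * z * w = y * z := by
    rw [mul_assoc, hzw, ← mul_assoc, Ring.inverse_mul_cancel_right _ _ hw]
  have e₂ : z * Ring.inverse x * y * x = z * y := by
    rw [mul_assoc, ← hxy, ← mul_assoc, Ring.inverse_mul_cancel_right _ _ hx]
  rw [sub_mul, sub_mul, e₁, e₂, sub_eq_sub_iff_sub_eq_sub.mpr hc]

theorem quasiDet_swap_even_odd (hx : IsUnit x) (hw : IsUnit w)
    (hS : IsUnit (x - y * Ring.inverse w * z))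
    (hxz : x * z = z * x) (hzw : z * w = w * z) (hz : z * z = 0)
    (hc : x * w - w * x = z * y + y * z) :
    Ring.inverse (x - y * Ring.inverse w * z) * w =
      (w - z * Ring.inverse x * y) * Ring.inverse x := by
  have hST : (x - y * Ring.inverse w * z) * (w - z * Ring.inverse x * y) = w * x := by
    have e₁ : x * (z * Ring.inverse x * y) = z * y := by
      rw [← mul_assoc, ← mul_assoc, hxz, Ring.mul_inverse_cancel_right _ _ hx]
    have e₂ : y * Ring.inverse w * z * w = y * z := by
      rw [mul_assoc, hzw, ← mul_assoc, Ring.inverse_mul_cancel_right _ _ hw]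
    have e₃ : y * Ring.inverse w * z * (z * Ring.inverse x * y) = 0 := by
      simp only [mul_assoc, ← mul_assoc z z, hz, zero_mul, mul_zero]
    rw [sub_mul, mul_sub, mul_sub, e₁, e₂, e₃, sub_zero, sub_sub, ← hc]
    abel
  rw [Ring.inverse_mul_eq_iff_eq_mul _ _ _ hS, ← mul_assoc, hST,
    Ring.mul_inverse_cancel_right _ _ hx]

theorem quasiDet_swap_odd_even (hx : IsUnit x) (hw : IsUnit w)
    (hT : IsUnit (w - z * Ring.inverse x * y))
    (hwy : w * y = y * w) (hxy : x * y = y * x) (hy : y * y = 0)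
    (hc : w * x - x * w = z * y + y * z) :
    (x - y * Ring.inverse w * z) * Ring.inverse w =
      Ring.inverse (w - z * Ring.inverse x * y) * x := by
  have hTS : (w - z * Ring.inverse x * y) * (x - y * Ring.inverse w * z) = x * w := by
    have e₁ : w * (y * Ring.inverse w * z) = y * z := by
      rw [← mul_assoc, ← mul_assoc, hwy, Ring.mul_inverse_cancel_right _ _ hw]
    have e₂ : z * Ring.inverse x * y * x = z * y := by
      rw [mul_assoc, ← hxy, ← mul_assoc, Ring.inverse_mul_cancel_right _ _ hx]
    have e₃ : z * Ring.inverse x * y * (y * Ring.inverse w * z) = 0 := by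
      simp only [mul_assoc, ← mul_assoc y y, hy, zero_mul, mul_zero]
    rw [sub_mul, mul_sub, mul_sub, e₁, e₂, e₃, sub_zero, sub_sub, add_comm (y * z), ← hc]
    abel
  rw [eq_comm, Ring.inverse_mul_eq_iff_eq_mul _ _ _ hT, ← mul_assoc, hTS,
    Ring.mul_inverse_cancel_right _ _ hw]

end QuasiDet

theorem pexp_quasiDet_swap {R ι : Type*} [Ring R] [Module ℂ R] {p : ι → ZMod 2}
    {h : Matrix ι ι R} (hh : InverseManinRelations p h) {r t : ι} {sr st : ℤ}
    (hpr : p r = if sr = 1 then 0 else 1) (hpt : p t = if st = 1 then 0 else 1)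
    (hx : IsUnit (h r r)) (hw : IsUnit (h t t))
    (hS : IsUnit (h r r - h r t * Ring.inverse (h t t) * h t r))
    (hT : IsUnit (h t t - h t r * Ring.inverse (h r r) * h r t)) :
    pexp (Ring.inverse (h r r - h r t * Ring.inverse (h t t) * h t r)) sr *
        pexp (Ring.inverse (h t t)) st =
      pexp (Ring.inverse (h t t - h t r * Ring.inverse (h r r) * h r t)) st *
        pexp (Ring.inverse (h r r)) sr := by
  have h_rttt := hh r t t t
  have h_trrr := hh t r r r
  have h_rtrt := hh r t r t
  have h_tttr := hh t t t r
  have h_ttrr := hh t t r r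
  have h_rrrt := hh r r r t
  have h_rrtt := hh r r t t
  have two : (1 + 1 : ZMod 2) = 0 := rfl
  set x := h r r
  set y := h r t
  set z := h t r
  set w := h t t
  -- Specialized to the parities of `r` and `t`, each instance above is twice (or four times) a
  -- commutation relation among `x, y, z, w`, or the relation between `[x, w]` and `[y, z]`.
  by_cases hr : sr = 1 <;> by_cases ht : st = 1 <;>
    simp only [hr, ht, if_true, if_false] at hpr hpt <;>
    simp only [pexp, hr, ht, if_true, if_false, Ring.inverse_inverse hx, Ring.inverse_inverse hw,
      Ring.inverse_inverse hS, Ring.inverse_inverse hT] <;>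
    simp only [hpr, hpt, mul_zero, mul_one, add_zero, zero_add, two, sgnZ_zero, sgnZ_one,
      one_smul, neg_smul] at h_rttt h_trrr h_rtrt h_tttr h_ttrr h_rrrt h_rrtt
  · refine quasiDet_swap_even_even hx hw ?_ ?_ ?_
    · exact eq_of_nsmul_sub_eq_zero two_ne_zero (by rw [← h_rttt]; abel)
    · exact eq_of_nsmul_sub_eq_zero two_ne_zero (by rw [← h_trrr]; abel)
    · rw [← sub_eq_zero, ← h_rtrt]; abel
  · refine quasiDet_swap_even_odd hx hw hS ?_ ?_ ?_ ?_
    · exact eq_of_nsmul_sub_eq_zero two_ne_zero (by rw [← h_trrr]; abel)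
    · exact eq_of_nsmul_sub_eq_zero two_ne_zero (by rw [← h_tttr]; abel)
    · exact eq_zero_of_nsmul_eq_zero four_ne_zero (by rw [← h_ttrr]; abel)
    · rw [← sub_eq_zero, ← neg_eq_zero, ← h_rtrt]; abel
  · refine quasiDet_swap_odd_even hx hw hT ?_ ?_ ?_ ?_
    · exact eq_of_nsmul_sub_eq_zero two_ne_zero (by rw [← h_rttt]; abel)
    · exact (eq_of_nsmul_sub_eq_zero two_ne_zero (by rw [← h_rrrt]; abel)).symm
    · exact eq_zero_of_nsmul_eq_zero four_ne_zero (by rw [← h_rrtt]; abel)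
    · rw [← sub_eq_zero, ← h_rtrt]; abel
  · refine quasiDet_swap_odd_odd hx hw ?_ ?_ ?_
    · exact (eq_of_nsmul_sub_eq_zero two_ne_zero (by rw [← h_tttr]; abel)).symm
    · exact eq_of_nsmul_sub_eq_zero two_ne_zero (by rw [← h_rrrt]; abel)
    · rw [← sub_eq_zero, ← h_rtrt]; abel

theorem pexp_quasiDet_swap_of_mapMatrix_constantCoeff {A ι : Type*} [Ring A] [Algebra ℂ A]
    [Fintype ι] [DecidableEq ι] {p : ι → ZMod 2} {B : Matrix ι ι A⟦X⟧}
    (hB : constantCoeff.mapMatrix B = 1) (hM : ManinRelations p B) {r t : ι} (hrt : r ≠ t)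
    {sr st : ℤ} (hpr : p r = if sr = 1 then 0 else 1) (hpt : p t = if st = 1 then 0 else 1) :
    pexp (Ring.inverse (Ring.inverse B r r - Ring.inverse B r t *
        Ring.inverse (Ring.inverse B t t) * Ring.inverse B t r)) sr *
        pexp (Ring.inverse (Ring.inverse B t t)) st =
      pexp (Ring.inverse (Ring.inverse B t t - Ring.inverse B t r *
        Ring.inverse (Ring.inverse B r r) * Ring.inverse B r t)) st *
        pexp (Ring.inverse (Ring.inverse B r r)) sr := by
  have c := constantCoeff_ringInverse_apply hB
  refine pexp_quasiDet_swap
    (hM.ringInverse (isUnit_of_mapMatrix_constantCoeff_eq_one hB) (isUnit_sandwich_superTensor hB))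
    hpr hpt ?_ ?_ ?_ ?_ <;>
  exact isUnit_of_constantCoeff_eq_one
    (by simp [c, Matrix.one_apply_ne hrt, Matrix.one_apply_ne hrt.symm])

section ListProd

variable {R : Type*} [Ring R]

theorem listProd_succ {N : ℕ} (f : Fin (N + 1) → R) :
    listProd f = f 0 * listProd fun i => f i.succ := by
  simp [listProd, List.finRange_succ, Function.comp_def]

theorem listProd_eq_of_adjacent_mul_eq :
    ∀ {N : ℕ} (f g : Fin (N + 1) → R) (k : Fin N),
      (∀ i, i ≠ k.castSucc → i ≠ k.succ → f i = g i) →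
      f k.castSucc * f k.succ = g k.castSucc * g k.succ → listProd f = listProd g
  | 0, _, _, k, _, _ => k.elim0
  | N + 1, f, g, k, hfg, hk => by
    rw [listProd_succ f, listProd_succ g]
    cases k using Fin.cases with
    | zero =>
      have hk' : f 0 * f (Fin.succ 0) = g 0 * g (Fin.succ 0) := hk
      rw [listProd_succ, listProd_succ, ← mul_assoc, ← mul_assoc, hk']
      congr 2
      funext i
      exact hfg _ (Fin.succ_ne_zero _) (fun h => Fin.succ_ne_zero i (Fin.succ_injective _ h))
    | succ j =>
      rw [hfg 0 (Fin.castSucc_ne_zero_iff.mpr (Fin.succ_ne_zero j)).symm (Fin.succ_ne_zero _).symm]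
      congr 1
      refine listProd_eq_of_adjacent_mul_eq _ _ j (fun i hi₁ hi₂ => hfg _ ?_ ?_) ?_
      · rwa [← Fin.succ_castSucc, Ne, Fin.succ_inj]
      · rwa [Ne, Fin.succ_inj]
      · simpa only [Fin.succ_castSucc] using hk

end ListProd

section QuasiMinor

variable {R : Type*} [Ring R]

theorem leadSub_submatrix {N : ℕ} (M : Matrix (Fin N) (Fin N) R) {τ : Equiv.Perm (Fin N)}
    {i : Fin N} (τ' : Equiv.Perm (Fin (i + 1)))
    (hτ : ∀ z, τ (Fin.castLE i.isLt z) = Fin.castLE i.isLt (τ' z)) :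
    leadSub (M.submatrix τ τ) i = (leadSub M i).submatrix τ' τ' := by
  ext a b
  simp [leadSub, hτ]

theorem dQM_submatrix_of_last {N : ℕ} {M : Matrix (Fin N) (Fin N) R} {τ : Equiv.Perm (Fin N)}
    {i : Fin N} (hM : IsUnit (leadSub M i)) (τ' : Equiv.Perm (Fin (i + 1)))
    (hτ : ∀ z, τ (Fin.castLE i.isLt z) = Fin.castLE i.isLt (τ' z))
    (hlast : τ' (Fin.last i) = Fin.last i) :
    dQM (M.submatrix τ τ) i = dQM M i := by
  rw [dQM, dQM, leadSub_submatrix M τ' hτ, (Matrix.ringInverse_submatrix_equiv hM τ').2,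
    Matrix.submatrix_apply, hlast]

theorem leadSub_castSucc {N : ℕ} (M : Matrix (Fin (N + 1)) (Fin (N + 1)) R) (k : Fin N) :
    leadSub M k.castSucc = (leadSub M k.succ).submatrix Fin.castSucc Fin.castSucc :=
  rfl

theorem dQM_castSucc {N : ℕ} (M : Matrix (Fin (N + 1)) (Fin (N + 1)) R) (k : Fin N)
    (hB : IsUnit (leadSub M k.succ))
    (hw : IsUnit (Ring.inverse (leadSub M k.succ) (Fin.last _) (Fin.last _))) :
    dQM M k.castSucc = Ring.inverse
      (Ring.inverse (leadSub M k.succ) (Fin.last k).castSucc (Fin.last k).castSucc -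
        Ring.inverse (leadSub M k.succ) (Fin.last k).castSucc (Fin.last (k + 1)) *
          Ring.inverse (Ring.inverse (leadSub M k.succ) (Fin.last (k + 1)) (Fin.last (k + 1))) *
          Ring.inverse (leadSub M k.succ) (Fin.last (k + 1)) (Fin.last k).castSucc) := by
  rw [dQM, leadSub_castSucc, (Matrix.ringInverse_submatrix_castSucc hB hw).2]
  rfl

theorem leadSub_submatrix_swap {N : ℕ} (M : Matrix (Fin (N + 1)) (Fin (N + 1)) R) (k : Fin N) :
    leadSub (M.submatrix (Equiv.swap k.castSucc k.succ) (Equiv.swap k.castSucc k.succ)) k.succ =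
      (leadSub M k.succ).submatrix (Equiv.swap (Fin.last k).castSucc (Fin.last (k + 1)))
        (Equiv.swap (Fin.last k).castSucc (Fin.last (k + 1))) := by
  refine leadSub_submatrix M _ fun z => ?_
  have h := (Fin.castLE_injective k.succ.isLt).swap_apply (Fin.last k).castSucc (Fin.last (k + 1)) z
  rwa [show Fin.castLE k.succ.isLt (Fin.last k).castSucc = k.castSucc from Fin.ext (by simp),
    show Fin.castLE k.succ.isLt (Fin.last (k + 1)) = k.succ from Fin.ext (by simp)] at h

end QuasiMinor

section Berezinian

variable {A : Type*} [Ring A]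

theorem dQM_submatrix_swap_of_ne {N : ℕ} {M : Matrix (Fin (N + 1)) (Fin (N + 1)) A⟦X⟧}
    (hM : constantCoeff.mapMatrix M = 1) (k : Fin N)
    {i : Fin (N + 1)} (h₁ : i ≠ k.castSucc) (h₂ : i ≠ k.succ) :
    dQM (M.submatrix (Equiv.swap k.castSucc k.succ) (Equiv.swap k.castSucc k.succ)) i =
      dQM M i := by
  have hunit := isUnit_of_mapMatrix_constantCoeff_eq_one
    (mapMatrix_constantCoeff_submatrix hM (Fin.castLE_injective i.isLt))
  have hi₁ : (i : ℕ) ≠ k := by simpa using Fin.val_ne_of_ne h₁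
  have hi₂ : (i : ℕ) ≠ k + 1 := by simpa using Fin.val_ne_of_ne h₂
  rcases Nat.lt_or_gt_of_ne hi₁ with hlt | hgt
  · refine dQM_submatrix_of_last hunit (Equiv.refl _) (fun z => ?_) rfl
    apply Equiv.swap_apply_of_ne_of_ne <;> exact Fin.ne_of_val_ne (by simp; omega)
  · have hki : (k : ℕ) + 1 < i + 1 := by omega
    refine dQM_submatrix_of_last hunit (Equiv.swap ⟨k, by omega⟩ ⟨k + 1, hki⟩) (fun z => ?_) ?_
    · exact (Fin.castLE_injective i.isLt).swap_apply ⟨k, by omega⟩ ⟨k + 1, hki⟩ z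
    · apply Equiv.swap_apply_of_ne_of_ne <;> exact Fin.ne_of_val_ne (by simp; omega)

theorem berPar_submatrix_swap [Algebra ℂ A] {N : ℕ} {M : Matrix (Fin (N + 1)) (Fin (N + 1)) A⟦X⟧}
    (hM₀ : constantCoeff.mapMatrix M = 1) {s : Fin (N + 1) → ℤ} (hM : ManinRelations (pdeg s) M)
    (k : Fin N) :
    berPar s M = berPar (fun i => s (Equiv.swap k.castSucc k.succ i))
      (M.submatrix (Equiv.swap k.castSucc k.succ) (Equiv.swap k.castSucc k.succ)) := by
  refine listProd_eq_of_adjacent_mul_eq _ _ k (fun i h₁ h₂ => ?_) ?_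
  · simp only [Equiv.swap_apply_of_ne_of_ne h₁ h₂, dQM_submatrix_swap_of_ne hM₀ k h₁ h₂]
  set B := leadSub M k.succ
  have hB₀ : constantCoeff.mapMatrix B = 1 :=
    mapMatrix_constantCoeff_submatrix hM₀ (Fin.castLE_injective _)
  have hB := isUnit_of_mapMatrix_constantCoeff_eq_one hB₀
  have hdiag (c : Fin (k + 2)) : IsUnit (Ring.inverse B c c) :=
    isUnit_of_constantCoeff_eq_one (by simp [constantCoeff_ringInverse_apply hB₀])
  set r : Fin (k + 2) := (Fin.last k).castSucc
  set t : Fin (k + 2) := Fin.last (k + 1)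
  have hr : Fin.castLE k.succ.isLt r = k.castSucc := Fin.ext (by simp [r])
  have ht : Fin.castLE k.succ.isLt t = k.succ := Fin.ext (by simp [t])
  have hrt : r ≠ t := Fin.ne_of_val_ne (by simp [r, t])
  have hsub := leadSub_submatrix_swap M k
  obtain ⟨hB', hinv'⟩ := Matrix.ringInverse_submatrix_equiv hB (Equiv.swap r t)
  have hw' : IsUnit (Ring.inverse (B.submatrix (Equiv.swap r t) (Equiv.swap r t)) t t) := by
    rw [hinv']; exact hdiag _
  simp only [Equiv.swap_apply_left, Equiv.swap_apply_right]
  rw [dQM_castSucc M k hB (hdiag _),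
    dQM_castSucc _ k (hsub ▸ hB') (hsub ▸ hw'), dQM, dQM, hsub, hinv']
  have hσr : Equiv.swap r t (Fin.last (k : ℕ)).castSucc = t := Equiv.swap_apply_left r t
  have hσt : Equiv.swap r t (Fin.last ((k : ℕ) + 1)) = r := Equiv.swap_apply_right r t
  have hσt' : Equiv.swap r t (Fin.last (k.succ : ℕ)) = r := Equiv.swap_apply_right r t
  simp only [Matrix.submatrix_apply, hσr, hσt, hσt']
  exact pexp_quasiDet_swap_of_mapMatrix_constantCoeff hB₀ (hM.submatrix _) hrt
    (by simp only [Function.comp_apply, hr]; rfl) (by simp only [Function.comp_apply, ht]; rfl)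

theorem berPar_submatrix_perm [Algebra ℂ A] {N : ℕ} {M : Matrix (Fin N) (Fin N) A⟦X⟧}
    (hM₀ : constantCoeff.mapMatrix M = 1) {s : Fin N → ℤ} (hM : ManinRelations (pdeg s) M)
    (ρ : Equiv.Perm (Fin N)) :
    berPar s M = berPar (fun i => s (ρ i)) (M.submatrix ρ ρ) := by
  cases N with
  | zero =>
    rw [Subsingleton.elim ρ 1]
    rfl
  | succ N =>
    have hρ : ρ ∈ Submonoid.closure (Set.range fun k : Fin N => Equiv.swap k.castSucc k.succ) := by
      rw [Equiv.Perm.mclosure_swap_castSucc_succ]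
      trivial
    induction hρ using Submonoid.closure_induction generalizing s M with
    | mem σ hσ =>
      obtain ⟨k, rfl⟩ := hσ
      exact berPar_submatrix_swap hM₀ hM k
    | one => rfl
    | mul σ₁ σ₂ _ _ ih₁ ih₂ =>
      rw [ih₁ hM₀ hM, ih₂ (mapMatrix_constantCoeff_submatrix hM₀ σ₁.injective) (hM.submatrix σ₁)]
      rfl

end Berezinian

theorem statement13_general (A : Type*) [Ring A] [Algebra ℂ A] (S : SuperAlg A) (m n : ℕ)
    (s : Fin (m + n) → ℤ)
    (M : Matrix (Fin (m + n)) (Fin (m + n)) (PowerSeries A))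
    (haff : IsAffine M) (hM : IsManin (gPS S.g) s M)
    (σ : Equiv.Perm (Fin (m + n))) :
    berPar s M = berPar (fun i => s (σ⁻¹ i)) (M.submatrix ⇑σ⁻¹ ⇑σ⁻¹) :=
  berPar_submatrix_perm haff.mapMatrix_constantCoeff hM.2 σ⁻¹

/-- **Statement 13.**  For an affine Manin matrix `A(w)` of parity `s` and `σ ∈ S_{m+n}`,
`Ber^s A(w) = Ber^{σ(s)} σ(A(w))`. -/
theorem statement13 (A : Type*) [Ring A] [Algebra ℂ A] (S : SuperAlg A) (m n : ℕ)
    (s : Fin (m + n) → ℤ) (hs : IsParitySeq s)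
    (hm : (Finset.univ.filter fun i => s i = 1).card = m)
    (M : Matrix (Fin (m + n)) (Fin (m + n)) (PowerSeries A))
    (haff : IsAffine M) (hM : IsManin (gPS S.g) s M)
    (σ : Equiv.Perm (Fin (m + n))) :
    berPar s M = berPar (fun i => s (σ⁻¹ i)) (M.submatrix ⇑σ⁻¹ ⇑σ⁻¹) :=
  statement13_general A S m n s M haff hM σ
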